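/- Let K₁, K₂ > 0 and C₁₁₁, C₁₁₂, C₁₂₂, C₂₂₂ ∈ ℝ. For u ∈ ℝ⁴ let a(u) be the 4×4 matrix with rows (0,0,0,1), (0,0,−1,0), (−c(u),−d₂(u),0,0), (d₁(u),c(u),0,0), where d₁(u) = K₁ + 6C₁₁₁·u¹ + 2C₁₁₂·u², d₂(u) = K₂ + 2C₁₂₂·u¹ + 6C₂₂₂·u², c(u) = 2C₁₁₂·u¹ + 2C₁₂₂·u². Set e₁ = (1,0,0,√K₁), ℓ₁ = (1/(2√K₁))·(√K₁,0,0,1), e₂ = (0,1,−√K₂,0), ℓ₂ = (1/(2√K₂))·(0,√K₂,−1,0). Then: e₁ and e₂ are eigenvectors of a(0) with eigenvalues √K₁ and √K₂ respectively, ℓ₁·e₁ = 1, ℓ₂·e₂ = 1, ℓ₁·e₂ = 0, ℓ₂·e₁ = 0, and the genuine non-linearity coefficients satisfy ℓ₁·( (a(e₁) − a(0))·e₁ ) = 3C₁₁₁/√K₁ and ℓ₂·( (a(e₂) − a(0))·e₂ ) = 3C₂₂₂/√K₂. In particular these coefficients are nonzero if and only if C₁₁₁ ≠ 0 and C₂₂₂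 ≠ 0 respectively. -/

import Mathlib

/-!
The entries of `a(u)` are affine in `u`, so `a(e) - a(0)` is the linear part of `a` evaluated
at `e`. Applied to `e₁ = (1, 0, 0, √K₁)` it gives `(0, 0, -2C₁₁₂, 6C₁₁₁)`, of which `ℓ₁` picks
out `6C₁₁₁ / (2√K₁)`; applied to `e₂` it gives `(0, 0, -6C₂₂₂, 2C₁₂₂)`, of which `ℓ₂` picks out
`6C₂₂₂ / (2√K₂)`.
-/

open Matrix

def eigvec₁ (s : ℝ) : Fin 4 → ℝ := ![1, 0, 0, s]

def eigvec₂ (s : ℝ) : Fin 4 → ℝ := ![0, 1, -s, 0]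

noncomputable def dualVec₁ (s : ℝ) : Fin 4 → ℝ := (1 / (2 * s)) • ![s, 0, 0, 1]

noncomputable def dualVec₂ (s : ℝ) : Fin 4 → ℝ := (1 / (2 * s)) • ![0, s, -1, 0]

theorem dualVec₁_dotProduct_eigvec₁ {s : ℝ} (hs : s ≠ 0) : dualVec₁ s ⬝ᵥ eigvec₁ s = 1 := by
  simp only [dualVec₁, eigvec₁, dotProduct, Fin.sum_univ_four, Pi.smul_apply, smul_eq_mul,
    cons_val, mul_one, mul_zero, add_zero]
  field_simp
  ring

theorem dualVec₂_dotProduct_eigvec₂ {s : ℝ} (hs : s ≠ 0) : dualVec₂ s ⬝ᵥ eigvec₂ s = 1 := by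
  simp only [dualVec₂, eigvec₂, dotProduct, Fin.sum_univ_four, Pi.smul_apply, smul_eq_mul,
    cons_val, mul_one, mul_zero, zero_add, add_zero]
  field_simp
  ring

theorem dualVec₁_dotProduct_eigvec₂ (s t : ℝ) : dualVec₁ s ⬝ᵥ eigvec₂ t = 0 := by
  simp [dualVec₁, eigvec₂, dotProduct, Fin.sum_univ_four]

theorem dualVec₂_dotProduct_eigvec₁ (s t : ℝ) : dualVec₂ s ⬝ᵥ eigvec₁ t = 0 := by
  simp [dualVec₂, eigvec₁, dotProduct, Fin.sum_univ_four]

section PlaneWave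

variable (K₁ K₂ C111 C112 C122 C222 : ℝ)

def planeWaveMatrix (w : Fin 4 → ℝ) : Matrix (Fin 4) (Fin 4) ℝ :=
  !![0, 0, 0, 1;
     0, 0, -1, 0;
     -(2 * C112 * w 0 + 2 * C122 * w 1), -(K₂ + 2 * C122 * w 0 + 6 * C222 * w 1), 0, 0;
     K₁ + 6 * C111 * w 0 + 2 * C112 * w 1, 2 * C112 * w 0 + 2 * C122 * w 1, 0, 0]

def planeWaveMatrixLinearPart (w : Fin 4 → ℝ) : Matrix (Fin 4) (Fin 4) ℝ :=
  !![0, 0, 0, 0;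
     0, 0, 0, 0;
     -(2 * C112 * w 0 + 2 * C122 * w 1), -(2 * C122 * w 0 + 6 * C222 * w 1), 0, 0;
     6 * C111 * w 0 + 2 * C112 * w 1, 2 * C112 * w 0 + 2 * C122 * w 1, 0, 0]

theorem planeWaveMatrix_sub_planeWaveMatrix_zero (w : Fin 4 → ℝ) :
    planeWaveMatrix K₁ K₂ C111 C112 C122 C222 w - planeWaveMatrix K₁ K₂ C111 C112 C122 C222 0 =
      planeWaveMatrixLinearPart C111 C112 C122 C222 w := by
  ext i j
  fin_cases i <;> fin_cases j <;> simp [planeWaveMatrix, planeWaveMatrixLinearPart] <;> ring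

theorem planeWaveMatrix_zero_mulVec_eigvec₁ {s : ℝ} (hs : s * s = K₁) :
    planeWaveMatrix K₁ K₂ C111 C112 C122 C222 0 *ᵥ eigvec₁ s = s • eigvec₁ s := by
  ext i
  fin_cases i <;> simp [planeWaveMatrix, eigvec₁, mulVec, dotProduct, Fin.sum_univ_four, hs]

theorem planeWaveMatrix_zero_mulVec_eigvec₂ {s : ℝ} (hs : s * s = K₂) :
    planeWaveMatrix K₁ K₂ C111 C112 C122 C222 0 *ᵥ eigvec₂ s = s • eigvec₂ s := by
  ext i
  fin_cases i <;> simp [planeWaveMatrix, eigvec₂, mulVec, dotProduct, Fin.sum_univ_four, hs]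

theorem dualVec₁_dotProduct_planeWaveMatrix_sub_zero_mulVec_eigvec₁ (s : ℝ) :
    dualVec₁ s ⬝ᵥ ((planeWaveMatrix K₁ K₂ C111 C112 C122 C222 (eigvec₁ s) -
        planeWaveMatrix K₁ K₂ C111 C112 C122 C222 0) *ᵥ eigvec₁ s) = 3 * C111 / s := by
  rw [planeWaveMatrix_sub_planeWaveMatrix_zero]
  simp only [dualVec₁, eigvec₁, planeWaveMatrixLinearPart, mulVec, dotProduct, Fin.sum_univ_four,
    Pi.smul_apply, smul_eq_mul, of_apply, cons_val', cons_val_fin_one, cons_val, mul_one,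
    mul_zero, zero_mul, add_zero, zero_add]
  ring

theorem dualVec₂_dotProduct_planeWaveMatrix_sub_zero_mulVec_eigvec₂ (s : ℝ) :
    dualVec₂ s ⬝ᵥ ((planeWaveMatrix K₁ K₂ C111 C112 C122 C222 (eigvec₂ s) -
        planeWaveMatrix K₁ K₂ C111 C112 C122 C222 0) *ᵥ eigvec₂ s) = 3 * C222 / s := by
  rw [planeWaveMatrix_sub_planeWaveMatrix_zero]
  simp only [dualVec₂, eigvec₂, planeWaveMatrixLinearPart, mulVec, dotProduct, Fin.sum_univ_four,
    Pi.smul_apply, smul_eq_mul, of_apply, cons_val', cons_val_fin_one, cons_val, mul_one,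
    mul_zero, zero_mul, add_zero, zero_add]
  ring

end PlaneWave

/-- Genuine non-linearity computation for the plane-wave crystal system
(last part of Lemma 4.1): at the trivial state, `e₁, e₂` are eigenvectors of
`a(0)` with eigenvalues `√K₁, √K₂`, dual to the covectors `ℓ₁, ℓ₂`, and the
genuine non-linearity coefficients are `3C₁₁₁/√K₁` and `3C₂₂₂/√K₂`. -/
theorem genuine_nonlinearity_coefficients
    (K₁ K₂ C111 C112 C122 C222 : ℝ) (hK₁ : 0 < K₁) (hK₂ : 0 < K₂) :
    let A : (Fin 4 → ℝ) → Matrix (Fin 4) (Fin 4) ℝ := fun w =>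
      !![0, 0, 0, 1;
         0, 0, -1, 0;
         -(2 * C112 * w 0 + 2 * C122 * w 1), -(K₂ + 2 * C122 * w 0 + 6 * C222 * w 1), 0, 0;
         K₁ + 6 * C111 * w 0 + 2 * C112 * w 1, 2 * C112 * w 0 + 2 * C122 * w 1, 0, 0]
    let e₁ : Fin 4 → ℝ := ![1, 0, 0, Real.sqrt K₁]
    let l₁ : Fin 4 → ℝ := (1 / (2 * Real.sqrt K₁)) • ![Real.sqrt K₁, 0, 0, 1]
    let e₂ : Fin 4 → ℝ := ![0, 1, -Real.sqrt K₂, 0]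
    let l₂ : Fin 4 → ℝ := (1 / (2 * Real.sqrt K₂)) • ![0, Real.sqrt K₂, -1, 0]
    (A 0).mulVec e₁ = Real.sqrt K₁ • e₁ ∧
    (A 0).mulVec e₂ = Real.sqrt K₂ • e₂ ∧
    dotProduct l₁ e₁ = 1 ∧
    dotProduct l₂ e₂ = 1 ∧
    dotProduct l₁ e₂ = 0 ∧
    dotProduct l₂ e₁ = 0 ∧
    dotProduct l₁ ((A e₁ - A 0).mulVec e₁) = 3 * C111 / Real.sqrt K₁ ∧
    dotProduct l₂ ((A e₂ - A 0).mulVec e₂) = 3 * C222 / Real.sqrt K₂ ∧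
    (3 * C111 / Real.sqrt K₁ ≠ 0 ↔ C111 ≠ 0) ∧
    (3 * C222 / Real.sqrt K₂ ≠ 0 ↔ C222 ≠ 0) := by
  have hs₁ : Real.sqrt K₁ ≠ 0 := (Real.sqrt_pos.2 hK₁).ne'
  have hs₂ : Real.sqrt K₂ ≠ 0 := (Real.sqrt_pos.2 hK₂).ne'
  exact ⟨planeWaveMatrix_zero_mulVec_eigvec₁ _ _ _ _ _ _ (Real.mul_self_sqrt hK₁.le),
    planeWaveMatrix_zero_mulVec_eigvec₂ _ _ _ _ _ _ (Real.mul_self_sqrt hK₂.le),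
    dualVec₁_dotProduct_eigvec₁ hs₁, dualVec₂_dotProduct_eigvec₂ hs₂,
    dualVec₁_dotProduct_eigvec₂ _ _, dualVec₂_dotProduct_eigvec₁ _ _,
    dualVec₁_dotProduct_planeWaveMatrix_sub_zero_mulVec_eigvec₁ _ _ _ _ _ _ _,
    dualVec₂_dotProduct_planeWaveMatrix_sub_zero_mulVec_eigvec₂ _ _ _ _ _ _ _,
    by simp [hs₁], by simp [hs₂]⟩
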